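/- arXiv:1406.4305 — 7 statements merged into one kernel-verified Lean document; each statement's English description precedes it below -/
import Mathlib

section
/- Define Δ(ε) = 1 − 4β²ε² − 4i(β/v)ε and let √Δ(ε) be its principal complex square root. Define the slow eigenvalue λ₁(ε) = (−1 − 2αε + √Δ(ε))/(2ε). Then, as ε → 0⁺, λ₁(ε) = −α − i(β/v) + β²·((1−v²)/v²)·ε + 2i(β³/v)·((1−v²)/v²)·ε² + O(ε³); that is, the function ε ↦ λ₁(ε) − (−α − i(β/v) + β²((1−v²)/v²)ε + 2i(β³/v)((1−v²)/v²)ε²) is O(ε³) as ε tends to 0 from the right. -/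
open Complex Filter Asymptotics Topology

/-!
Let `Q` be the cubic Taylor polynomial of `√Δ` at `0`. It is chosen so that
`-1 - 2αε + Q(ε) = 2ε · P(ε)`, where `P` is the claimed expansion, hence
`λ₁(ε) - P(ε) = (√Δ(ε) - Q(ε)) / (2ε)`. The polynomial `Δ - Q²` is divisible by `ε⁴`, and
`√Δ - Q = (Δ - Q²) / (√Δ + Q)` with `√Δ + Q → 2`, so `√Δ - Q = O(ε⁴)` and the quotient by `2ε`
is `O(ε³)`.
-/

theorem cpow_half_sub_isBigO_of_sq_sub_isBigO {ι F : Type*} [Norm F] {l : Filter ι}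
    {f g : ι → ℂ} {k : ι → F} {z : ℂ} (hz : z ∈ slitPlane) (hf : Tendsto f l (𝓝 z))
    (hg : Tendsto g l (𝓝 (z ^ (1 / 2 : ℂ)))) (h : (fun x => f x - g x ^ 2) =O[l] k) :
    (fun x => f x ^ (1 / 2 : ℂ) - g x) =O[l] k := by
  have hsqrt : Tendsto (fun x => f x ^ (1 / 2 : ℂ)) l (𝓝 (z ^ (1 / 2 : ℂ))) :=
    ((continuousAt_cpow_const hz).tendsto).comp hf
  have hsum_ne : z ^ (1 / 2 : ℂ) + z ^ (1 / 2 : ℂ) ≠ 0 := by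
    rw [← two_mul]
    exact mul_ne_zero two_ne_zero (cpow_ne_zero_iff_of_exponent_ne_zero (by norm_num) |>.2
      (slitPlane_ne_zero hz))
  have hsum := hsqrt.add hg
  have hinv : (fun x => (f x ^ (1 / 2 : ℂ) + g x)⁻¹) =O[l] (fun _ => (1 : ℂ)) :=
    (hsum.inv₀ hsum_ne).isBigO_one ℂ
  refine ((((isBigO_refl _ l).mul hinv).congr_right (fun _ => mul_one _)).trans h).congr' ?_
    EventuallyEq.rfl
  filter_upwards [hsum.eventually_ne hsum_ne] with x hx
  have hsq : (f x ^ (1 / 2 : ℂ)) ^ 2 = f x := by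
    simpa only [Nat.cast_ofNat, one_div] using cpow_nat_inv_pow (f x) two_ne_zero
  rw [← div_eq_mul_inv, div_eq_iff hx]
  linear_combination -hsq

theorem isBigO_div_ofReal_of_isBigO_pow_succ {l : Filter ℝ} {f : ℝ → ℂ} {n : ℕ}
    (h : f =O[l] (fun x => x ^ (n + 1))) : (fun x => f x / x) =O[l] (fun x => x ^ n) := by
  obtain ⟨C, hC0, hC⟩ := h.exists_nonneg
  refine IsBigO.of_bound C ?_
  filter_upwards [hC.bound] with x hx
  rcases eq_or_ne x 0 with rfl | hx0
  · simp only [ofReal_zero, div_zero, norm_zero, norm_pow]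
    positivity
  · rw [norm_div, norm_real, div_le_iff₀ (norm_pos_iff.2 hx0)]
    simpa [pow_succ, mul_assoc] using hx

noncomputable section

def bgkDiscriminant (β v ε : ℝ) : ℂ :=
  1 - 4 * (β : ℂ) ^ 2 * (ε : ℂ) ^ 2 - 4 * Complex.I * ((β : ℂ) / (v : ℂ)) * (ε : ℂ)

def slowEigenvalue (α β v ε : ℝ) : ℂ :=
  (-1 - 2 * (α : ℂ) * (ε : ℂ) + bgkDiscriminant β v ε ^ ((1 : ℂ) / 2)) / (2 * (ε : ℂ))

def slowEigenvalueExpansion (α β v ε : ℝ) : ℂ :=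
  -(α : ℂ) - Complex.I * ((β : ℂ) / (v : ℂ))
    + (β : ℂ) ^ 2 * ((1 - (v : ℂ) ^ 2) / (v : ℂ) ^ 2) * (ε : ℂ)
    + 2 * Complex.I * ((β : ℂ) ^ 3 / (v : ℂ)) * ((1 - (v : ℂ) ^ 2) / (v : ℂ) ^ 2) * (ε : ℂ) ^ 2

def sqrtBgkDiscriminantTaylor (β v ε : ℝ) : ℂ :=
  1 - 2 * Complex.I * ((β : ℂ) / v) * ε + 2 * (β : ℂ) ^ 2 * ((1 - (v : ℂ) ^ 2) / v ^ 2) * ε ^ 2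
    + 4 * Complex.I * ((β : ℂ) ^ 3 / v) * ((1 - (v : ℂ) ^ 2) / v ^ 2) * ε ^ 3

end

theorem tendsto_bgkDiscriminant (β v : ℝ) : Tendsto (bgkDiscriminant β v) (𝓝 0) (𝓝 1) := by
  have : Continuous (bgkDiscriminant β v) := by unfold bgkDiscriminant; fun_prop
  simpa [bgkDiscriminant] using this.tendsto 0

theorem tendsto_sqrtBgkDiscriminantTaylor (β v : ℝ) :
    Tendsto (sqrtBgkDiscriminantTaylor β v) (𝓝 0) (𝓝 1) := by
  have : Continuous (sqrtBgkDiscriminantTaylor β v) := by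
    unfold sqrtBgkDiscriminantTaylor; fun_prop
  simpa [sqrtBgkDiscriminantTaylor] using this.tendsto 0

theorem bgkDiscriminant_sub_sq_sqrtBgkDiscriminantTaylor {β v : ℝ} (hv : v ≠ 0) (ε : ℝ) :
    bgkDiscriminant β v ε - sqrtBgkDiscriminantTaylor β v ε ^ 2 =
      -(ε : ℂ) ^ 4 * (4 * (β : ℂ) ^ 4 * (1 - (v : ℂ) ^ 2) * (5 - (v : ℂ) ^ 2) / (v : ℂ) ^ 4
        + 16 * Complex.I * (β : ℂ) ^ 5 * (1 - (v : ℂ) ^ 2) ^ 2 / (v : ℂ) ^ 5 * ε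
        - 16 * (β : ℂ) ^ 6 * (1 - (v : ℂ) ^ 2) ^ 2 / (v : ℂ) ^ 6 * ε ^ 2) := by
  have hv' : (v : ℂ) ≠ 0 := ofReal_ne_zero.2 hv
  unfold bgkDiscriminant sqrtBgkDiscriminantTaylor
  field_simp
  ring_nf
  rw [I_sq]
  ring

theorem bgkDiscriminant_sub_sq_sqrtBgkDiscriminantTaylor_isBigO {β v : ℝ} (hv : v ≠ 0) :
    (fun ε => bgkDiscriminant β v ε - sqrtBgkDiscriminantTaylor β v ε ^ 2) =O[𝓝 0]
      (fun ε : ℝ => ε ^ 4) := by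
  simp_rw [bgkDiscriminant_sub_sq_sqrtBgkDiscriminantTaylor hv]
  have hpow : (fun ε : ℝ => -(ε : ℂ) ^ 4) =O[𝓝 0] (fun ε : ℝ => ε ^ 4) :=
    isBigO_of_le _ fun ε => by simp
  refine (hpow.mul ((Continuous.tendsto ?_ 0).isBigO_one ℝ)).congr_right fun _ => mul_one _
  fun_prop

theorem slowEigenvalue_sub_expansion {α β v ε : ℝ} (hv : v ≠ 0) (hε : ε ≠ 0) :
    slowEigenvalue α β v ε - slowEigenvalueExpansion α β v ε =
      2⁻¹ * ((bgkDiscriminant β v ε ^ (1 / 2 : ℂ) - sqrtBgkDiscriminantTaylor β v ε) / ε) := by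
  have hv' : (v : ℂ) ≠ 0 := ofReal_ne_zero.2 hv
  have hε' : (ε : ℂ) ≠ 0 := ofReal_ne_zero.2 hε
  unfold slowEigenvalue slowEigenvalueExpansion sqrtBgkDiscriminantTaylor
  field_simp
  ring

/-- Asymptotic expansion of the slow eigenvalue
`λ₁(ε) = (−1 − 2αε + √Δ(ε))/(2ε)` of the Fourier symbol of the
semi-discretized two-velocity relaxation system, as `ε → 0⁺`:
`λ₁(ε) = −α − i(β/v) + β²((1−v²)/v²)ε + 2i(β³/v)((1−v²)/v²)ε² + O(ε³)`. -/
theorem slow_eigenvalue_expansion (α β v : ℝ) (hv : v ≠ 0) :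
    (fun ε : ℝ =>
        ((-1 - 2 * (α : ℂ) * (ε : ℂ)
            + (1 - 4 * (β : ℂ) ^ 2 * (ε : ℂ) ^ 2
                - 4 * Complex.I * ((β : ℂ) / (v : ℂ)) * (ε : ℂ)) ^ ((1 : ℂ) / 2))
            / (2 * (ε : ℂ))
          - (-(α : ℂ) - Complex.I * ((β : ℂ) / (v : ℂ))
              + (β : ℂ) ^ 2 * ((1 - (v : ℂ) ^ 2) / (v : ℂ) ^ 2) * (ε : ℂ)
              + 2 * Complex.I * ((β : ℂ) ^ 3 / (v : ℂ)) * ((1 - (v : ℂ) ^ 2) / (v : ℂ) ^ 2)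
                  * (ε : ℂ) ^ 2)))
      =O[nhdsWithin 0 (Set.Ioi 0)] (fun ε : ℝ => ε ^ 3) := by
  change (fun ε => slowEigenvalue α β v ε - slowEigenvalueExpansion α β v ε) =O[𝓝[>] 0] _
  have hsqrt : (fun ε => bgkDiscriminant β v ε ^ (1 / 2 : ℂ) - sqrtBgkDiscriminantTaylor β v ε)
      =O[𝓝 0] (fun ε : ℝ => ε ^ (3 + 1)) :=
    cpow_half_sub_isBigO_of_sq_sub_isBigO one_mem_slitPlane (tendsto_bgkDiscriminant β v)
      (by rw [one_cpow]; exact tendsto_sqrtBgkDiscriminantTaylor β v)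
      (bgkDiscriminant_sub_sq_sqrtBgkDiscriminantTaylor_isBigO hv)
  refine ((isBigO_div_ofReal_of_isBigO_pow_succ hsqrt).const_mul_left 2⁻¹
    |>.mono nhdsWithin_le_nhds).congr' ?_ EventuallyEq.rfl
  filter_upwards [self_mem_nhdsWithin] with ε hε
  exact (slowEigenvalue_sub_expansion hv hε.ne').symm
end

section
/- Define Δ(ε) = 1 − 4β²ε² − 4i(β/v)ε and let √Δ(ε) be its principal complex square root. Define the fast eigenvalue λ₂(ε) = (−1 − 2αε − √Δ(ε))/(2ε). Then, as ε → 0⁺, λ₂(ε) + 1/ε = −α + i(β/v) − β²·((1−v²)/v²)·ε − 2i(β³/v)·((1−v²)/v²)·ε² + O(ε³); that is, the function ε ↦ λ₂(ε) + 1/ε − (−α + i(β/v) − β²((1−v²)/v²)ε − 2i(β³/v)((1−v²)/v²)ε²) is O(ε³) as ε tends to 0 from the right. -/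
/-!
Let `S` be the cubic Taylor polynomial of `√Δ` at `0`. Then `S² − Δ = O(ε⁴)` and `S + √Δ → 2`,
so the factorization `S − √Δ = (S² − Δ) / (S + √Δ)` gives `S − √Δ = O(ε⁴)`. The left-hand side
of the expansion is exactly `(S − √Δ) / (2ε)`, hence `O(ε³)`.
-/

open Complex Filter Asymptotics Topology

theorem Asymptotics.IsBigO.sub_of_sq_sub_sq {ι 𝕜 E : Type*} [NormedField 𝕜] [Norm E]
    {l : Filter ι} {s t : ι → 𝕜} {u : ι → E} {b : 𝕜}
    (hst : Tendsto (fun x => s x + t x) l (𝓝 b)) (hb : b ≠ 0)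
    (h : (fun x => s x ^ 2 - t x ^ 2) =O[l] u) : (fun x => s x - t x) =O[l] u := by
  have hinv : (fun x => (s x + t x)⁻¹) =O[l] (fun _ => (1 : 𝕜)) := (hst.inv₀ hb).isBigO_one 𝕜
  have hquot : (fun x => (s x ^ 2 - t x ^ 2) * (s x + t x)⁻¹)
      =O[l] (fun x => s x ^ 2 - t x ^ 2) := by
    simpa using (isBigO_refl _ l).mul hinv
  refine (hquot.trans h).congr' ?_ EventuallyEq.rfl
  filter_upwards [hst.eventually_ne hb] with x hx
  field_simp
  ring

theorem Asymptotics.IsBigO.div_of_isBigO_pow_succ {ι 𝕜 : Type*} [NormedField 𝕜] {l : Filter ι}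
    {f φ : ι → 𝕜} {n : ℕ} (h : f =O[l] fun x => φ x ^ (n + 1)) :
    (fun x => f x / φ x) =O[l] fun x => φ x ^ n := by
  simp only [div_eq_mul_inv]
  refine (h.mul (isBigO_refl (fun x => (φ x)⁻¹) l)).trans (isBigO_of_le l fun x =>
    (?_ : ‖φ x ^ (n + 1) * (φ x)⁻¹‖ ≤ ‖φ x ^ n‖))
  rcases eq_or_ne (φ x) 0 with hx | hx
  · simp [hx]
  · rw [pow_succ, mul_inv_cancel_right₀ hx]

namespace RelaxationSymbol

variable (β v : ℝ)

noncomputable def discr (ε : ℝ) : ℂ :=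
  1 - 4 * (β : ℂ) ^ 2 * (ε : ℂ) ^ 2 - 4 * I * ((β : ℂ) / (v : ℂ)) * (ε : ℂ)

noncomputable def sqrtDiscrTaylor (ε : ℝ) : ℂ :=
  1 - 2 * I * ((β : ℂ) / (v : ℂ)) * (ε : ℂ)
    + 2 * (β : ℂ) ^ 2 * ((1 - (v : ℂ) ^ 2) / (v : ℂ) ^ 2) * (ε : ℂ) ^ 2
    + 4 * I * ((β : ℂ) ^ 3 / (v : ℂ)) * ((1 - (v : ℂ) ^ 2) / (v : ℂ) ^ 2) * (ε : ℂ) ^ 3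

theorem tendsto_discr_cpow_half : Tendsto (fun ε => discr β v ε ^ ((1 : ℂ) / 2)) (𝓝 0) (𝓝 1) := by
  have hcont : Continuous (discr β v) := by unfold discr; fun_prop
  have := (hcont.tendsto 0).cpow (tendsto_const_nhds (x := (1 : ℂ) / 2))
    (by simp [discr, Complex.mem_slitPlane_iff])
  simpa [discr] using this

theorem tendsto_sqrtDiscrTaylor : Tendsto (sqrtDiscrTaylor β v) (𝓝 0) (𝓝 1) := by
  have hcont : Continuous (sqrtDiscrTaylor β v) := by unfold sqrtDiscrTaylor; fun_prop
  simpa [sqrtDiscrTaylor] using hcont.tendsto 0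

variable {v} in
theorem sqrtDiscrTaylor_sq_sub_discr_isBigO (hv : v ≠ 0) :
    (fun ε => sqrtDiscrTaylor β v ε ^ 2 - discr β v ε) =O[𝓝 0] (fun ε : ℝ => (ε : ℂ) ^ 4) := by
  have hvC : (v : ℂ) ≠ 0 := ofReal_ne_zero.mpr hv
  set R : ℝ → ℂ := fun ε =>
      (4 * (β : ℂ) ^ 4 * (1 - (v : ℂ) ^ 2) ^ 2 / (v : ℂ) ^ 4
        + 16 * (β : ℂ) ^ 4 * (1 - (v : ℂ) ^ 2) / (v : ℂ) ^ 4)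
      + 16 * I * (β : ℂ) ^ 5 * (1 - (v : ℂ) ^ 2) ^ 2 / (v : ℂ) ^ 5 * (ε : ℂ)
      - 16 * (β : ℂ) ^ 6 * (1 - (v : ℂ) ^ 2) ^ 2 / (v : ℂ) ^ 6 * (ε : ℂ) ^ 2 with hR
  have hident : ∀ ε : ℝ, sqrtDiscrTaylor β v ε ^ 2 - discr β v ε = R ε * (ε : ℂ) ^ 4 := by
    intro ε
    simp only [sqrtDiscrTaylor, discr, hR]
    field_simp
    linear_combination (16*(β:ℂ)^6*(ε:ℂ)^6 - 16*(v:ℂ)^2*(β:ℂ)^4*(ε:ℂ)^4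
      - 32*(v:ℂ)^2*(β:ℂ)^6*(ε:ℂ)^6 + 4*(v:ℂ)^4*(β:ℂ)^2*(ε:ℂ)^2
      + 16*(v:ℂ)^4*(β:ℂ)^4*(ε:ℂ)^4 + 16*(v:ℂ)^4*(β:ℂ)^6*(ε:ℂ)^6) * I_sq
  have hRbdd : R =O[𝓝 0] (fun _ => (1 : ℂ)) := by
    have hcont : Continuous R := by simp only [hR]; fun_prop
    exact (hcont.tendsto 0).isBigO_one ℂ
  simpa [hident] using hRbdd.mul (isBigO_refl (fun ε : ℝ => (ε : ℂ) ^ 4) (𝓝 0))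

variable {v} in
theorem sqrtDiscrTaylor_sub_cpow_half_isBigO (hv : v ≠ 0) :
    (fun ε => sqrtDiscrTaylor β v ε - discr β v ε ^ ((1 : ℂ) / 2))
      =O[𝓝 0] (fun ε : ℝ => (ε : ℂ) ^ 4) := by
  have hsum : Tendsto (fun ε => sqrtDiscrTaylor β v ε + discr β v ε ^ ((1 : ℂ) / 2))
      (𝓝 0) (𝓝 2) := by
    simpa [one_add_one_eq_two] using (tendsto_sqrtDiscrTaylor β v).add (tendsto_discr_cpow_half β v)
  refine IsBigO.sub_of_sq_sub_sq hsum two_ne_zero ?_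
  simpa only [one_div, cpow_ofNat_inv_pow] using sqrtDiscrTaylor_sq_sub_discr_isBigO β hv

theorem fast_eigenvalue_add_inv_sub_eq (α β v ε : ℝ) (hε : ε ≠ 0) (z : ℂ) :
    (-1 - 2 * (α : ℂ) * (ε : ℂ) - z) / (2 * (ε : ℂ)) + 1 / (ε : ℂ)
      - (-(α : ℂ) + I * ((β : ℂ) / (v : ℂ))
          - (β : ℂ) ^ 2 * ((1 - (v : ℂ) ^ 2) / (v : ℂ) ^ 2) * (ε : ℂ)
          - 2 * I * ((β : ℂ) ^ 3 / (v : ℂ)) * ((1 - (v : ℂ) ^ 2) / (v : ℂ) ^ 2) * (ε : ℂ) ^ 2)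
      = (sqrtDiscrTaylor β v ε - z) / (2 * ε) := by
  have hεC : (ε : ℂ) ≠ 0 := ofReal_ne_zero.mpr hε
  simp only [sqrtDiscrTaylor]
  field_simp
  ring

end RelaxationSymbol

open RelaxationSymbol in
/-- Asymptotic expansion of the fast eigenvalue
`λ₂(ε) = (−1 − 2αε − √Δ(ε))/(2ε)` of the Fourier symbol of the
semi-discretized two-velocity relaxation system, as `ε → 0⁺`:
`λ₂(ε) + 1/ε = −α + i(β/v) − β²((1−v²)/v²)ε − 2i(β³/v)((1−v²)/v²)ε² + O(ε³)`. -/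
theorem fast_eigenvalue_expansion (α β v : ℝ) (hv : v ≠ 0) :
    (fun ε : ℝ =>
        ((-1 - 2 * (α : ℂ) * (ε : ℂ)
            - (1 - 4 * (β : ℂ) ^ 2 * (ε : ℂ) ^ 2
                - 4 * Complex.I * ((β : ℂ) / (v : ℂ)) * (ε : ℂ)) ^ ((1 : ℂ) / 2))
            / (2 * (ε : ℂ))
          + 1 / (ε : ℂ)
          - (-(α : ℂ) + Complex.I * ((β : ℂ) / (v : ℂ))
              - (β : ℂ) ^ 2 * ((1 - (v : ℂ) ^ 2) / (v : ℂ) ^ 2) * (ε : ℂ)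
              - 2 * Complex.I * ((β : ℂ) ^ 3 / (v : ℂ)) * ((1 - (v : ℂ) ^ 2) / (v : ℂ) ^ 2)
                  * (ε : ℂ) ^ 2)))
      =O[nhdsWithin 0 (Set.Ioi 0)] (fun ε : ℝ => ε ^ 3) := by
  have hcube : (fun ε => (sqrtDiscrTaylor β v ε - discr β v ε ^ ((1 : ℂ) / 2)) / (2 * ε))
      =O[𝓝 0] fun ε : ℝ => ε ^ 3 := by
    have := ((sqrtDiscrTaylor_sub_cpow_half_isBigO β hv).div_of_isBigO_pow_succ).const_mul_left 2⁻¹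
    refine isBigO_ofReal_right.mp ?_
    simpa only [ofReal_pow, div_eq_inv_mul, mul_inv, mul_assoc] using this
  refine (hcube.mono nhdsWithin_le_nhds).congr' ?_ EventuallyEq.rfl
  filter_upwards [self_mem_nhdsWithin] with ε (hε : 0 < ε)
  exact (fast_eigenvalue_add_inv_sub_eq α β v ε hε.ne' _).symm
end

section
/- Let J be even, let v : {1,…,J} → ℝ and w : {1,…,J} → ℝ satisfy v_j ≠ 0, w_j ≥ 0, v_{J+1−j} = −v_j and w_{J+1−j} = w_j for all j, and Σ_{j=1}^J w_j = 1. Then for every real number c with |v_j| ≥ |c| for all j, the discrete diffusion coefficient B = Σ_{j=1}^J w_j·v_j²·(1 + c/v_j) − c² is nonnegative. -/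
/-- Nonnegativity of the discrete diffusion coefficient (subcharacteristic
condition): for a symmetric discrete velocity set with nonnegative weights
summing to one and `|v_j| ≥ |c|` for all `j`, the coefficient
`B = Σ_j w_j v_j² (1 + c/v_j) − c²` is nonnegative. -/
theorem discrete_diffusion_nonneg
    (J : ℕ) (hJ : Even J)
    (v w : ℕ → ℝ)
    (hv : ∀ j ∈ Finset.Icc 1 J, v j ≠ 0)
    (hw : ∀ j ∈ Finset.Icc 1 J, 0 ≤ w j)
    (hvsym : ∀ j ∈ Finset.Icc 1 J, v (J + 1 - j) = -v j)
    (hwsym : ∀ j ∈ Finset.Icc 1 J, w (J + 1 - j) = w j)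
    (hwsum : ∑ j ∈ Finset.Icc 1 J, w j = 1)
    (c : ℝ) (hc : ∀ j ∈ Finset.Icc 1 J, |c| ≤ |v j|) :
    0 ≤ ∑ j ∈ Finset.Icc 1 J, w j * v j ^ 2 * (1 + c / v j) - c ^ 2 := by
  have hzero : ∑ j ∈ Finset.Icc 1 J, w j * v j = 0 := by
    apply Finset.sum_involution (fun a _ => J + 1 - a)
    · intro a ha
      simp only [Finset.mem_Icc] at ha
      rw [hwsym a (by simp [Finset.mem_Icc]; omega),
          hvsym a (by simp [Finset.mem_Icc]; omega)]
      ring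
    · intro a ha _
      simp only [Finset.mem_Icc] at ha
      obtain ⟨k, hk⟩ := hJ
      omega
    · intro a ha
      simp only [Finset.mem_Icc] at ha ⊢
      omega
    · intro a ha
      simp only [Finset.mem_Icc] at ha
      omega
  have hsplit : ∀ j ∈ Finset.Icc 1 J,
      w j * v j ^ 2 * (1 + c / v j) = w j * v j ^ 2 + c * (w j * v j) := by
    intro j hj
    have hvj := hv j hj
    field_simp
  rw [Finset.sum_congr rfl hsplit, Finset.sum_add_distrib, ← Finset.mul_sum,
      hzero, mul_zero, add_zero]
  have hge : c ^ 2 = ∑ j ∈ Finset.Icc 1 J, w j * c ^ 2 := by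
    rw [← Finset.sum_mul, hwsum, one_mul]
  rw [sub_nonneg, hge]
  apply Finset.sum_le_sum
  intro j hj
  have h1 : c ^ 2 ≤ v j ^ 2 := by
    rw [← sq_abs c, ← sq_abs (v j)]
    exact pow_le_pow_left₀ (abs_nonneg c) (hc j hj) 2
  exact mul_le_mul_of_nonneg_left h1 (hw j hj)
end

section
/- Let R ≥ 1 and S ≥ 1 be integers and v_max > 0 a real number, and set ρ_r = (r/R)·v_max for 1 ≤ r ≤ R and θ_s = (s/S)·(π/2) for 1 ≤ s ≤ 4S. Then (1/(4RS))·Σ_{r=1}^{R} Σ_{s=1}^{4S} ρ_r²·cos²(θ_s) = (1/(4RS))·Σ_{r=1}^{R} Σ_{s=1}^{4S} ρ_r²·sin²(θ_s) = v_max²·(R+1)·(2R+1)/(12·R²). In particular, for the orthogonal-velocities discretization the second moments a_x² and a_y² of the horizontal and vertical velocity components are equal, with common value v_max²(R+1)(2R+1)/(12R²). -/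
open Real

lemma sum_sq_Icc (R : ℕ) : ∑ r ∈ Finset.Icc 1 R, (r:ℝ)^2 = R*(R+1)*(2*R+1)/6 := by
  induction R with
  | zero => simp
  | succ n ih =>
      rw [Finset.sum_Icc_succ_top (by omega), ih]
      push_cast; ring

lemma sum_cos_block (S : ℕ) (hS : 1 ≤ S) :
    ∑ s ∈ Finset.Icc 1 (4*S), Real.cos ((s:ℝ) * π / S) = 0 := by
  have hS0 : (S:ℝ) ≠ 0 := by positivity
  set T : ℝ := ∑ t ∈ Finset.Ioc 0 S, Real.cos ((t:ℝ) * π / S) with hT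
  have key : ∀ c : ℕ, ∑ s ∈ Finset.Ioc c (c + S), Real.cos ((s:ℝ) * π / S)
      = ∑ t ∈ Finset.Ioc 0 S, Real.cos (((c:ℝ) + t) * π / S) := by
    intro c
    have hmap : Finset.Ioc c (c + S) = Finset.map (addLeftEmbedding c) (Finset.Ioc 0 S) := by
      rw [Finset.map_add_left_Ioc]; simp
    rw [hmap, Finset.sum_map]
    exact Finset.sum_congr rfl (by intro t _; simp [addLeftEmbedding])
  have k1 : ∑ s ∈ Finset.Ioc S (2*S), Real.cos ((s:ℝ) * π / S) = -T := by
    rw [show 2*S = S + S by ring, key, hT, ← Finset.sum_neg_distrib]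
    refine Finset.sum_congr rfl fun t _ => ?_
    have : ((S:ℝ) + t) * π / S = (t:ℝ) * π / S + π := by field_simp; ring
    rw [this, Real.cos_add_pi]
  have k2 : ∑ s ∈ Finset.Ioc (2*S) (3*S), Real.cos ((s:ℝ) * π / S) = T := by
    rw [show 3*S = 2*S + S by ring, key, hT]
    refine Finset.sum_congr rfl fun t _ => ?_
    have : ((2*S:ℕ):ℝ) + t = 2*(S:ℝ) + t := by push_cast; ring
    rw [this]
    have : (2*(S:ℝ) + t) * π / S = (t:ℝ) * π / S + 2*π := by field_simp; ring
    rw [this, Real.cos_add_two_pi]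
  have k3 : ∑ s ∈ Finset.Ioc (3*S) (4*S), Real.cos ((s:ℝ) * π / S) = -T := by
    rw [show 4*S = 3*S + S by ring, key, hT, ← Finset.sum_neg_distrib]
    refine Finset.sum_congr rfl fun t _ => ?_
    have : ((3*S:ℕ):ℝ) + t = 3*(S:ℝ) + t := by push_cast; ring
    rw [this]
    have : (3*(S:ℝ) + t) * π / S = ((t:ℝ) * π / S + π) + 2*π := by field_simp; ring
    rw [this, Real.cos_add_two_pi, Real.cos_add_pi]
  have split : Finset.Icc 1 (4*S) = Finset.Ioc 0 (4*S) := by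
    ext x; simp [Nat.lt_iff_add_one_le]
  have e1 := Finset.sum_Ioc_consecutive (f := fun s : ℕ => Real.cos ((s:ℝ) * π / S))
    (Nat.zero_le S) (by omega : S ≤ 4*S)
  have e2 := Finset.sum_Ioc_consecutive (f := fun s : ℕ => Real.cos ((s:ℝ) * π / S))
    (by omega : S ≤ 2*S) (by omega : 2*S ≤ 4*S)
  have e3 := Finset.sum_Ioc_consecutive (f := fun s : ℕ => Real.cos ((s:ℝ) * π / S))
    (by omega : 2*S ≤ 3*S) (by omega : 3*S ≤ 4*S)
  rw [split, ← e1, ← e2, ← e3, k1, k2, k3, ← hT]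
  ring

lemma sum_cos_sq (S : ℕ) (hS : 1 ≤ S) :
    ∑ s ∈ Finset.Icc 1 (4*S), Real.cos ((s:ℝ) / S * (π / 2)) ^ 2 = 2*(S:ℝ) := by
  have : ∀ s ∈ Finset.Icc 1 (4*S), Real.cos ((s:ℝ) / S * (π / 2)) ^ 2
      = 1/2 + Real.cos ((s:ℝ) * π / S)/2 := by
    intro s _
    rw [Real.cos_sq]
    congr 2
    ring
  rw [Finset.sum_congr rfl this, Finset.sum_add_distrib]
  have h2 : ∑ x ∈ Finset.Icc 1 (4*S), Real.cos ((x:ℝ) * π / S)/2 = 0 := by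
    rw [← Finset.sum_div, sum_cos_block S hS]; simp
  rw [h2]
  simp [Nat.card_Icc]
  push_cast; ring

lemma sum_sin_sq (S : ℕ) (hS : 1 ≤ S) :
    ∑ s ∈ Finset.Icc 1 (4*S), Real.sin ((s:ℝ) / S * (π / 2)) ^ 2 = 2*(S:ℝ) := by
  have : ∀ s ∈ Finset.Icc 1 (4*S), Real.sin ((s:ℝ) / S * (π / 2)) ^ 2
      = 1 - Real.cos ((s:ℝ) / S * (π / 2)) ^ 2 := by
    intro s _; rw [Real.sin_sq]
  rw [Finset.sum_congr rfl this, Finset.sum_sub_distrib, sum_cos_sq S hS]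
  simp [Nat.card_Icc]
  push_cast; ring


/-- Second moments of the orthogonal-velocities discretization: the weighted
averages of `(v^x)²` and `(v^y)²` coincide and equal
`v_max²(R+1)(2R+1)/(12R²)`. -/
theorem orthogonal_velocities_second_moments
    (R S : ℕ) (hR : 1 ≤ R) (hS : 1 ≤ S) (vmax : ℝ) (hvmax : 0 < vmax) :
    (1 / (4 * (R : ℝ) * (S : ℝ))) *
        ∑ r ∈ Finset.Icc 1 R, ∑ s ∈ Finset.Icc 1 (4 * S),
          ((r : ℝ) / (R : ℝ) * vmax) ^ 2 * Real.cos ((s : ℝ) / (S : ℝ) * (π / 2)) ^ 2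
      = (1 / (4 * (R : ℝ) * (S : ℝ))) *
        ∑ r ∈ Finset.Icc 1 R, ∑ s ∈ Finset.Icc 1 (4 * S),
          ((r : ℝ) / (R : ℝ) * vmax) ^ 2 * Real.sin ((s : ℝ) / (S : ℝ) * (π / 2)) ^ 2 ∧
    (1 / (4 * (R : ℝ) * (S : ℝ))) *
        ∑ r ∈ Finset.Icc 1 R, ∑ s ∈ Finset.Icc 1 (4 * S),
          ((r : ℝ) / (R : ℝ) * vmax) ^ 2 * Real.cos ((s : ℝ) / (S : ℝ) * (π / 2)) ^ 2
      = vmax ^ 2 * ((R : ℝ) + 1) * (2 * (R : ℝ) + 1) / (12 * (R : ℝ) ^ 2) := by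
  have hR0 : (R:ℝ) ≠ 0 := by positivity
  have hS0 : (S:ℝ) ≠ 0 := by positivity
  have hc : ∀ r ∈ Finset.Icc 1 R, ∑ s ∈ Finset.Icc 1 (4 * S),
      ((r : ℝ) / (R : ℝ) * vmax) ^ 2 * Real.cos ((s : ℝ) / (S : ℝ) * (π / 2)) ^ 2
      = ((r : ℝ) / (R : ℝ) * vmax) ^ 2 * (2*(S:ℝ)) := by
    intro r _; rw [← Finset.mul_sum, sum_cos_sq S hS]
  have hs : ∀ r ∈ Finset.Icc 1 R, ∑ s ∈ Finset.Icc 1 (4 * S),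
      ((r : ℝ) / (R : ℝ) * vmax) ^ 2 * Real.sin ((s : ℝ) / (S : ℝ) * (π / 2)) ^ 2
      = ((r : ℝ) / (R : ℝ) * vmax) ^ 2 * (2*(S:ℝ)) := by
    intro r _; rw [← Finset.mul_sum, sum_sin_sq S hS]
  rw [Finset.sum_congr rfl hc, Finset.sum_congr rfl hs]
  refine ⟨rfl, ?_⟩
  have : ∀ r ∈ Finset.Icc 1 R, ((r : ℝ) / (R : ℝ) * vmax) ^ 2 * (2*(S:ℝ))
      = (r:ℝ)^2 * (vmax^2 / (R:ℝ)^2 * (2*(S:ℝ))) := by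
    intro r _; field_simp
  rw [Finset.sum_congr rfl this, ← Finset.sum_mul, sum_sq_Icc R]
  field_simp
  ring
end

section
/- Let α, β ∈ ℝ with (α, β) ≠ (0, 0), let v ∈ ℝ with v ≠ 0, and let ε > 0 and Δt > 0. Set λ = −α − i(β/v) ∈ ℂ and τ = 1 + ε·λ. Then |τ − (1 − ε/Δt)| ≤ ε/Δt if and only if Δt ≤ 2αv²/(α²v² + β²). -/
open Complex

/-! With `h = ε / Δt`, the disk condition reads `‖ελ + h‖ ≤ h`; squaring, it becomes
`ε²|λ|² + 2hε Re λ ≤ 0`, i.e. `Δt |λ|² ≤ -2 Re λ`, in which `ε` no longer appears.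
For `λ = -α - iβ/v` this is `Δt (α²v² + β²) ≤ 2αv²`. -/

theorem Complex.norm_add_ofReal_le_iff {z : ℂ} {r : ℝ} (hr : 0 ≤ r) :
    ‖z + r‖ ≤ r ↔ normSq z + 2 * r * z.re ≤ 0 := by
  rw [← sq_le_sq₀ (norm_nonneg _) hr, ← normSq_eq_norm_sq, normSq_add, normSq_ofReal]
  simp only [conj_ofReal, re_mul_ofReal]
  constructor <;> intro h <;> linarith

theorem norm_one_add_mul_sub_le_iff {ε Δt : ℝ} (hε : 0 < ε) (hΔt : 0 < Δt) (μ : ℂ) :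
    ‖(1 + (ε : ℂ) * μ) - ((1 - ε / Δt : ℝ) : ℂ)‖ ≤ ε / Δt ↔ Δt * normSq μ ≤ -2 * μ.re := by
  have hshift : (1 + (ε : ℂ) * μ) - ((1 - ε / Δt : ℝ) : ℂ) = ε * μ + ((ε / Δt : ℝ) : ℂ) := by
    push_cast; ring
  have hscale : normSq (ε * μ) + 2 * (ε / Δt) * (ε * μ).re
      = ε ^ 2 / Δt * (Δt * normSq μ + 2 * μ.re) := by
    rw [normSq_mul, normSq_ofReal, re_ofReal_mul]; field_simp
  rw [hshift, norm_add_ofReal_le_iff (by positivity), hscale, ← mul_zero (ε ^ 2 / Δt),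
    mul_le_mul_iff_right₀ (by positivity)]
  constructor <;> intro h <;> linarith

/-- CFL-like bound for projective forward Euler applied to the relaxation
system: the dominant amplification factor `τ = 1 + ελ` with `λ = −α − iβ/v`
lies in the slow stability disk `D(1 − ε/Δt, ε/Δt)` if and only if
`Δt ≤ 2αv²/(α²v² + β²)`. -/
theorem pfe_slow_disk_iff_cfl
    (α β v : ℝ) (hαβ : ¬(α = 0 ∧ β = 0)) (hv : v ≠ 0)
    (ε Δt : ℝ) (hε : 0 < ε) (hΔt : 0 < Δt) :
    ‖((1 + (ε : ℂ) * (-(α : ℂ) - Complex.I * ((β : ℂ) / (v : ℂ))))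
        - ((1 - ε / Δt : ℝ) : ℂ))‖ ≤ ε / Δt ↔
      Δt ≤ 2 * α * v ^ 2 / (α ^ 2 * v ^ 2 + β ^ 2) := by
  have hden : 0 < α ^ 2 * v ^ 2 + β ^ 2 := by
    rcases not_and_or.mp hαβ with h | h <;> positivity
  have hre : (-(α : ℂ) - I * ((β : ℂ) / (v : ℂ))).re = -α := by simp
  have him : (-(α : ℂ) - I * ((β : ℂ) / (v : ℂ))).im = -(β / v) := by simp
  have hnormSq : normSq (-(α : ℂ) - I * ((β : ℂ) / (v : ℂ))) = (α ^ 2 * v ^ 2 + β ^ 2) / v ^ 2 := by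
    rw [normSq_apply, hre, him]; field_simp
  rw [norm_one_add_mul_sub_le_iff hε hΔt, hre, hnormSq, le_div_iff₀ hden, mul_div_assoc',
    div_le_iff₀ (by positivity), neg_mul_neg]
end

section
/- Let v ≥ 1 and Δx > 0 be real numbers. Then for every θ ∈ ℝ with cos θ ≠ 1 one has Δx/v ≤ 2·v·(1 − cos θ)·Δx/(v²·(1 − cos θ)² + sin² θ), and for θ = π the right-hand side equals Δx/v. Consequently, the minimum over θ of the CFL bound 2·v·(1 − cos θ)·Δx/(v²(1 − cos θ)² + sin² θ) equals Δx/v. -/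
open Real

/-- For the first-order upwind discretization of the relaxation system, the
CFL bound `2v(1 − cos θ)Δx/(v²(1 − cos θ)² + sin² θ)` is minimized over `θ`
(with `cos θ ≠ 1`) at `θ = π`, where it equals `Δx/v`. -/
theorem upwind_cfl_minimum
    (v Δx : ℝ) (hv : 1 ≤ v) (hΔx : 0 < Δx)
    (f : ℝ → ℝ)
    (hf : ∀ θ, f θ = 2 * v * (1 - Real.cos θ) * Δx /
      (v ^ 2 * (1 - Real.cos θ) ^ 2 + Real.sin θ ^ 2)) :
    (∀ θ : ℝ, Real.cos θ ≠ 1 → Δx / v ≤ f θ) ∧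
    f π = Δx / v ∧
    IsLeast (f '' {θ : ℝ | Real.cos θ ≠ 1}) (Δx / v) := by
  have hv0 : (0:ℝ) < v := lt_of_lt_of_le one_pos hv
  have hmain : ∀ θ : ℝ, Real.cos θ ≠ 1 → Δx / v ≤ f θ := by
    intro θ hθ
    rw [hf]
    have hc1 : Real.cos θ ≤ 1 := Real.cos_le_one θ
    have hc2 : -1 ≤ Real.cos θ := Real.neg_one_le_cos θ
    have hclt : Real.cos θ < 1 := lt_of_le_of_ne hc1 hθ
    have hs : Real.sin θ ^ 2 = 1 - Real.cos θ ^ 2 := Real.sin_sq θ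
    have hp : 0 < 1 - Real.cos θ := by linarith
    have hv2 : 1 ≤ v ^ 2 := by nlinarith
    have hq : 0 ≤ (1 + Real.cos θ) * (v ^ 2 - 1) := by
      apply mul_nonneg <;> linarith
    have hD : 0 < v ^ 2 * (1 - Real.cos θ) ^ 2 + Real.sin θ ^ 2 := by
      rw [hs]; nlinarith [sq_nonneg (1 - Real.cos θ)]
    rw [div_le_div_iff₀ hv0 hD, hs]
    nlinarith [mul_nonneg (mul_nonneg hΔx.le hp.le) hq]
  have hpi : f π = Δx / v := by
    rw [hf]
    rw [Real.cos_pi, Real.sin_pi]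
    field_simp
    ring
  refine ⟨hmain, hpi, ⟨⟨π, by norm_num [Real.cos_pi], hpi⟩, ?_⟩⟩
  rintro x ⟨θ, hθ, rfl⟩
  exact hmain θ hθ
end

section
/- Define Δ(ε) = 1 − 4β²ε² − 4i(β/v)ε, let √Δ(ε) be its principal complex square root, and let λ₂(ε) = (−1 − 2αε − √Δ(ε))/(2ε) be the fast eigenvalue. Then the fast amplification factor of the inner forward Euler integrator with step δt = ε, namely τ₂(ε) = 1 + ε·λ₂(ε) = (1 − 2αε − √Δ(ε))/2, satisfies τ₂(ε) = (−α + i(β/v))·ε + O(ε²) as ε → 0⁺; in particular τ₂(ε) → 0 as ε → 0⁺, so the quickly damped modes of the inner forward Euler scheme with δt = ε are centered around 0. -/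
/-!
Write `w = 1 - Δ(ε) = 4β²ε² + 4i(β/v)ε = O(ε)`. The principal root `√Δ` has nonnegative real part,
so `|1 + √Δ| ≥ 1`, and `w = (1 - √Δ)(1 + √Δ)` gives `|1 - √Δ| ≤ |w|`. Hence
`1 - √Δ - w/2 = (1 - √Δ)²/2 = O(ε²)`, i.e. `τ₂(ε) = w/4 - αε + O(ε²)`, and `w/4 - αε` is
`(-α + iβ/v)ε` up to the term `β²ε²`.
-/

open Complex Filter Asymptotics

namespace Complex

lemma cpow_one_half_sq (z : ℂ) : (z ^ (1 / 2 : ℂ)) ^ 2 = z := by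
  rw [one_div]
  exact_mod_cast cpow_nat_inv_pow z two_ne_zero

lemma one_le_norm_one_add_cpow_one_half (z : ℂ) : 1 ≤ ‖1 + z ^ (1 / 2 : ℂ)‖ := by
  have hre : 0 ≤ (z ^ (1 / 2 : ℂ)).re := by
    rw [one_div, cpow_inv_two_re]
    exact Real.sqrt_nonneg _
  calc (1 : ℝ) ≤ (1 + z ^ (1 / 2 : ℂ)).re := by rw [add_re, one_re]; linarith
    _ ≤ ‖1 + z ^ (1 / 2 : ℂ)‖ := re_le_norm _

lemma norm_one_sub_cpow_one_half_le (z : ℂ) : ‖1 - z ^ (1 / 2 : ℂ)‖ ≤ ‖1 - z‖ := by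
  have hfactor : 1 - z = (1 - z ^ (1 / 2 : ℂ)) * (1 + z ^ (1 / 2 : ℂ)) := by
    linear_combination cpow_one_half_sq z
  rw [hfactor, norm_mul]
  exact le_mul_of_one_le_right (norm_nonneg _) (one_le_norm_one_add_cpow_one_half z)

lemma norm_one_sub_cpow_one_half_sub_half_le (z : ℂ) :
    ‖1 - z ^ (1 / 2 : ℂ) - (1 - z) / 2‖ ≤ ‖1 - z‖ ^ 2 / 2 := by
  have hsq : 1 - z ^ (1 / 2 : ℂ) - (1 - z) / 2 = (1 - z ^ (1 / 2 : ℂ)) ^ 2 / 2 := by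
    linear_combination -cpow_one_half_sq z / 2
  rw [hsq, norm_div, norm_pow, RCLike.norm_ofNat]
  gcongr
  exact norm_one_sub_cpow_one_half_le z

end Complex

lemma Asymptotics.IsBigO.one_sub_cpow_one_half_sub_half {ι : Type*} {l : Filter ι} {u : ι → ℂ}
    {g : ι → ℝ} (h : (fun x => 1 - u x) =O[l] g) :
    (fun x => 1 - u x ^ (1 / 2 : ℂ) - (1 - u x) / 2) =O[l] fun x => g x ^ 2 := by
  refine IsBigO.trans ?_ (h.pow 2)
  refine IsBigO.of_bound (1 / 2) (Eventually.of_forall fun x => ?_)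
  rw [norm_pow, mul_comm, ← div_eq_mul_one_div]
  exact norm_one_sub_cpow_one_half_sub_half_le (u x)

lemma isBigO_quadratic_add_linear_nhds_zero (a b : ℂ) :
    (fun ε : ℝ => a * (ε : ℂ) ^ 2 + b * ε) =O[nhds 0] fun ε => ε := by
  have hfactor : (fun ε : ℝ => a * (ε : ℂ) ^ 2 + b * ε) = fun ε : ℝ => (ε : ℂ) * (a * ε + b) := by
    funext ε; ring
  have hbdd : (fun ε : ℝ => a * (ε : ℂ) + b) =O[nhds 0] fun _ => (1 : ℝ) :=
    (Continuous.tendsto (by fun_prop) 0).isBigO_one ℝ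
  rw [hfactor]
  have hid : (fun ε : ℝ => (ε : ℂ)) =O[nhds 0] fun ε => ε := isBigO_of_le _ fun ε => by simp
  simpa using hid.mul hbdd

lemma isBigO_fast_amplification_sub_linear (α b c : ℂ) :
    (fun ε : ℝ => (1 - 2 * α * ε - (1 - 4 * c * (ε : ℂ) ^ 2 - 4 * I * b * ε) ^ (1 / 2 : ℂ)) / 2
      - (-α + I * b) * ε) =O[nhds 0] fun ε => ε ^ 2 := by
  have hw : (fun ε : ℝ => 1 - (1 - 4 * c * (ε : ℂ) ^ 2 - 4 * I * b * ε)) =O[nhds 0]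
      fun ε => ε := by
    simpa [sub_sub, ← mul_assoc] using isBigO_quadratic_add_linear_nhds_zero (4 * c) (4 * I * b)
  have hsplit : (fun ε : ℝ =>
        (1 - 2 * α * ε - (1 - 4 * c * (ε : ℂ) ^ 2 - 4 * I * b * ε) ^ (1 / 2 : ℂ)) / 2
          - (-α + I * b) * ε)
      = fun ε : ℝ => c * (ε : ℂ) ^ 2
          + 2⁻¹ * (1 - (1 - 4 * c * (ε : ℂ) ^ 2 - 4 * I * b * ε) ^ (1 / 2 : ℂ)
            - (1 - (1 - 4 * c * (ε : ℂ) ^ 2 - 4 * I * b * ε)) / 2) := by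
    funext ε; ring
  rw [hsplit]
  exact ((isBigO_of_le _ fun ε => by simp).const_mul_left c).add
    (hw.one_sub_cpow_one_half_sub_half.const_mul_left _)

theorem fast_amplification_factor_centered_general (α β v : ℝ) :
    ((fun ε : ℝ =>
        ((1 - 2 * (α : ℂ) * (ε : ℂ)
            - (1 - 4 * (β : ℂ) ^ 2 * (ε : ℂ) ^ 2
                - 4 * Complex.I * ((β : ℂ) / (v : ℂ)) * (ε : ℂ)) ^ ((1 : ℂ) / 2)) / 2
          - (-(α : ℂ) + Complex.I * ((β : ℂ) / (v : ℂ))) * (ε : ℂ)))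
      =O[nhdsWithin 0 (Set.Ioi 0)] (fun ε : ℝ => ε ^ 2)) ∧
    Filter.Tendsto
      (fun ε : ℝ =>
        (1 - 2 * (α : ℂ) * (ε : ℂ)
            - (1 - 4 * (β : ℂ) ^ 2 * (ε : ℂ) ^ 2
                - 4 * Complex.I * ((β : ℂ) / (v : ℂ)) * (ε : ℂ)) ^ ((1 : ℂ) / 2)) / 2)
      (nhdsWithin 0 (Set.Ioi 0)) (nhds 0) := by
  have hO := (isBigO_fast_amplification_sub_linear α (β / v) (β ^ 2)).mono
    (nhdsWithin_le_nhds (s := Set.Ioi 0))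
  refine ⟨hO, ?_⟩
  have hquad : Tendsto (fun ε : ℝ => ε ^ 2) (nhdsWithin 0 (Set.Ioi 0)) (nhds 0) :=
    tendsto_nhdsWithin_of_tendsto_nhds (by simpa using (continuous_pow 2).tendsto (0 : ℝ))
  have hlin : Tendsto (fun ε : ℝ => (-(α : ℂ) + I * (β / v)) * ε) (nhdsWithin 0 (Set.Ioi 0))
      (nhds 0) :=
    tendsto_nhdsWithin_of_tendsto_nhds <|
      (by fun_prop : Continuous fun ε : ℝ => (-(α : ℂ) + I * (β / v)) * ε).tendsto' 0 0 (by simp)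
  simpa using (hO.trans_tendsto hquad).add hlin

/-- The fast amplification factor of the inner forward Euler integrator with
step `δt = ε`, namely `τ₂(ε) = 1 + ελ₂(ε) = (1 − 2αε − √Δ(ε))/2`, satisfies
`τ₂(ε) = (−α + iβ/v)ε + O(ε²)` as `ε → 0⁺`; in particular `τ₂(ε) → 0`, so the
quickly damped modes are centered around `0`. -/
theorem fast_amplification_factor_centered (α β v : ℝ) (hv : v ≠ 0) :
    ((fun ε : ℝ =>
        ((1 - 2 * (α : ℂ) * (ε : ℂ)
            - (1 - 4 * (β : ℂ) ^ 2 * (ε : ℂ) ^ 2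
                - 4 * Complex.I * ((β : ℂ) / (v : ℂ)) * (ε : ℂ)) ^ ((1 : ℂ) / 2)) / 2
          - (-(α : ℂ) + Complex.I * ((β : ℂ) / (v : ℂ))) * (ε : ℂ)))
      =O[nhdsWithin 0 (Set.Ioi 0)] (fun ε : ℝ => ε ^ 2)) ∧
    Filter.Tendsto
      (fun ε : ℝ =>
        (1 - 2 * (α : ℂ) * (ε : ℂ)
            - (1 - 4 * (β : ℂ) ^ 2 * (ε : ℂ) ^ 2
                - 4 * Complex.I * ((β : ℂ) / (v : ℂ)) * (ε : ℂ)) ^ ((1 : ℂ) / 2)) / 2)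
      (nhdsWithin 0 (Set.Ioi 0)) (nhds 0) :=
  fast_amplification_factor_centered_general α β v
end
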